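/- Let q : ℕ^d → Matrix (Fin s) (Fin s) ℝ with q(0) = 0, and let u = Σ_{n≥0} q^(n) (pointwise finite). Then for any G : ℕ^d → Matrix (Fin s) (Fin s) ℝ, the multi-time Markov renewal equation L = G + q * L has the unique solution L = u * G. -/

import Mathlib

noncomputable def conv {d s : ℕ} (A B : (Fin d → ℕ) → Matrix (Fin s) (Fin s) ℝ) :
    (Fin d → ℕ) → Matrix (Fin s) (Fin s) ℝ :=
  fun k => ∑ l ∈ Finset.Iic k, A l * B (k - l)

noncomputable def oneSeq {d s : ℕ} : (Fin d → ℕ) → Matrix (Fin s) (Fin s) ℝ :=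
  fun k => if k = 0 then 1 else 0

noncomputable def convPow {d s : ℕ} (A : (Fin d → ℕ) → Matrix (Fin s) (Fin s) ℝ) :
    ℕ → (Fin d → ℕ) → Matrix (Fin s) (Fin s) ℝ
  | 0 => oneSeq
  | n + 1 => conv A (convPow A n)

/-!
Since `q 0 = 0`, the value of `q * M` at `k` only involves `M` at indices of smaller total degree
`∑ i, k i`. Hence `q^(n)` vanishes below degree `n`, so `u = ∑ₙ q^(n)` is a finite sum at each `k`
and satisfies `u = 𝕀 + q * u`; by associativity `u * G` then solves `L = G + q * L`. The difference
of two solutions is a fixed point of `M ↦ q * M`, which vanishes by induction on the total degree.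
-/

open Finset

theorem Finset.sum_Iic_sum_Iic_tsub {α M : Type*} [AddCommMonoid α] [PartialOrder α]
    [CanonicallyOrderedAdd α] [Sub α] [OrderedSub α] [IsOrderedCancelAddMonoid α]
    [LocallyFiniteOrderBot α] [AddCommMonoid M] (k : α) (F : α → α → α → M) :
    ∑ l ∈ Iic k, ∑ m ∈ Iic l, F m (l - m) (k - l) =
      ∑ m ∈ Iic k, ∑ j ∈ Iic (k - m), F m j (k - m - j) := by
  rw [sum_sigma', sum_sigma']
  refine sum_bij' (fun p _ => ⟨p.2, p.1 - p.2⟩) (fun p _ => ⟨p.1 + p.2, p.1⟩) ?_ ?_ ?_ ?_ ?_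
  · rintro ⟨l, m⟩ hp
    simp only [mem_sigma, mem_Iic] at hp ⊢
    exact ⟨hp.2.trans hp.1, tsub_le_tsub_right hp.1 m⟩
  · rintro ⟨m, j⟩ hp
    simp only [mem_sigma, mem_Iic] at hp ⊢
    exact ⟨(le_tsub_iff_left hp.1).mp hp.2, le_self_add⟩
  · rintro ⟨l, m⟩ hp
    simp only [mem_sigma, mem_Iic] at hp
    simp [add_tsub_cancel_of_le hp.2]
  · rintro ⟨m, j⟩ -
    simp
  · rintro ⟨l, m⟩ hp
    simp only [mem_sigma, mem_Iic] at hp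
    simp only [tsub_tsub_tsub_cancel_right hp.2]

theorem sum_tsub_lt_sum {ι : Type*} [Fintype ι] {k l : ι → ℕ} (hlk : l ≤ k) (hl : l ≠ 0) :
    ∑ i, (k - l) i < ∑ i, k i := by
  obtain ⟨j, hj⟩ := Function.ne_iff.mp hl
  have hlj : 0 < l j := Nat.pos_of_ne_zero hj
  exact sum_lt_sum (fun i _ => Nat.sub_le (k i) (l i))
    ⟨j, mem_univ j, Nat.sub_lt (hlj.trans_le (hlk j)) hlj⟩

section Convolution

variable {d s : ℕ} {A B C G M M' q : (Fin d → ℕ) → Matrix (Fin s) (Fin s) ℝ}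

theorem conv_add_left : conv (A + B) C = conv A C + conv B C := by
  funext k
  simp only [conv, Pi.add_apply, add_mul, sum_add_distrib]

theorem conv_sub_right : conv A (B - C) = conv A B - conv A C := by
  funext k
  simp only [conv, Pi.sub_apply, mul_sub, sum_sub_distrib]

theorem conv_sum_right {ι : Type*} (t : Finset ι) (B : ι → (Fin d → ℕ) → Matrix (Fin s) (Fin s) ℝ)
    (k : Fin d → ℕ) : conv A (fun j => ∑ n ∈ t, B n j) k = ∑ n ∈ t, conv A (B n) k := by
  simp only [conv, mul_sum]
  exact sum_comm

theorem oneSeq_conv : conv oneSeq G = G := by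
  funext k
  rw [conv, sum_eq_single_of_mem 0 (mem_Iic.mpr bot_le) fun l _ hl => by simp [oneSeq, hl]]
  simp [oneSeq]

theorem conv_assoc : conv (conv A B) C = conv A (conv B C) := by
  funext k
  simp only [conv, sum_mul, mul_sum, mul_assoc]
  exact sum_Iic_sum_Iic_tsub k fun m j i => A m * (B j * C i)

theorem conv_apply_congr (h0 : q 0 = 0) {k : Fin d → ℕ}
    (h : ∀ j : Fin d → ℕ, ∑ i, j i < ∑ i, k i → M j = M' j) : conv q M k = conv q M' k := by
  refine sum_congr rfl fun l hl => ?_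
  rcases eq_or_ne l 0 with rfl | hl0
  · simp [h0]
  · rw [h _ (sum_tsub_lt_sum (mem_Iic.mp hl) hl0)]

theorem convPow_apply_eq_zero (h0 : q 0 = 0) {n : ℕ} {k : Fin d → ℕ} (hk : ∑ i, k i < n) :
    convPow q n k = 0 := by
  induction n generalizing k with
  | zero => omega
  | succ n ih =>
    calc convPow q (n + 1) k = conv q 0 k := conv_apply_congr h0 fun j hj => ih (by omega)
      _ = 0 := by simp [conv]

theorem eq_zero_of_eq_conv (h0 : q 0 = 0) (hM : M = conv q M) : M = 0 := by
  funext k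
  induction hk : ∑ i, k i using Nat.strong_induction_on generalizing k with
  | _ N ih =>
    calc M k = conv q 0 k := by
          rw [hM]; exact conv_apply_congr h0 fun j hj => ih _ (hk ▸ hj) j rfl
      _ = 0 := by simp [conv]

end Convolution

/-- The renewal function `u = ∑ₙ q^(n)`, truncated at `n = ∑ i, k i`: when `q 0 = 0` the later terms
vanish at `k` (`convPow_apply_eq_zero`). -/
noncomputable def renewalSeq {d s : ℕ} (q : (Fin d → ℕ) → Matrix (Fin s) (Fin s) ℝ) :
    (Fin d → ℕ) → Matrix (Fin s) (Fin s) ℝ :=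
  fun k => ∑ n ∈ range (∑ i, k i + 1), convPow q n k

section Renewal

variable {d s : ℕ} {q G : (Fin d → ℕ) → Matrix (Fin s) (Fin s) ℝ}

theorem renewalSeq_apply_eq_sum_range (h0 : q 0 = 0) {k : Fin d → ℕ} {N : ℕ}
    (hN : ∑ i, k i < N) : renewalSeq q k = ∑ n ∈ range N, convPow q n k :=
  sum_subset (range_subset_range.mpr hN) fun n _ hn =>
    convPow_apply_eq_zero h0 (by simpa using hn)

theorem renewalSeq_eq_oneSeq_add_conv (h0 : q 0 = 0) :
    renewalSeq q = oneSeq + conv q (renewalSeq q) := by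
  funext k
  have htrunc : conv q (renewalSeq q) k =
      conv q (fun j => ∑ n ∈ range (∑ i, k i), convPow q n j) k :=
    conv_apply_congr h0 fun j hj => renewalSeq_apply_eq_sum_range h0 hj
  rw [Pi.add_apply, htrunc, conv_sum_right, renewalSeq, sum_range_succ', add_comm]
  rfl

theorem conv_renewalSeq (h0 : q 0 = 0) :
    conv (renewalSeq q) G = G + conv q (conv (renewalSeq q) G) := by
  conv_lhs => rw [renewalSeq_eq_oneSeq_add_conv h0, conv_add_left, oneSeq_conv, conv_assoc]

end Renewal

theorem markov_renewal_equation_solution {d s : ℕ}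
    (q : (Fin d → ℕ) → Matrix (Fin s) (Fin s) ℝ) (h0 : q 0 = 0)
    (u : (Fin d → ℕ) → Matrix (Fin s) (Fin s) ℝ)
    (hu : u = fun k => ∑ n ∈ Finset.range (∑ i, k i + 1), convPow q n k)
    (G : (Fin d → ℕ) → Matrix (Fin s) (Fin s) ℝ) :
    conv u G = G + conv q (conv u G) ∧
    ∀ L : (Fin d → ℕ) → Matrix (Fin s) (Fin s) ℝ,
      L = G + conv q L → L = conv u G := by
  obtain rfl : u = renewalSeq q := hu
  refine ⟨conv_renewalSeq h0, fun L hL => sub_eq_zero.mp (eq_zero_of_eq_conv h0 ?_)⟩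
  rw [conv_sub_right]
  nth_rewrite 1 [hL, conv_renewalSeq h0]
  abel
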